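/- For n = 2m+1 odd, Σ_{σ ∈ S_n} (-1)^{ℓ(σ)} x^{L(σ)} = Π_{j=1}^{m} (1 - x^{2j}), and for n = 2m even, Σ_{σ ∈ S_n} (-1)^{ℓ(σ)} x^{L(σ)} = (1 - x^m) Π_{j=1}^{m-1} (1 - x^{2j}). -/

import Mathlib

open Finset Polynomial
open scoped Classical

/-- Number of inversions (Coxeter length) of a permutation of `Fin n`. -/
def ellA (n : ℕ) (σ : Equiv.Perm (Fin n)) : ℕ :=
  (Finset.univ.filter (fun p : Fin n × Fin n => p.1 < p.2 ∧ σ p.2 < σ p.1)).card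

/-- The odd length: inversions `(i,j)` with `i ≢ j (mod 2)`. -/
def oddLA (n : ℕ) (σ : Equiv.Perm (Fin n)) : ℕ :=
  (Finset.univ.filter (fun p : Fin n × Fin n =>
    p.1 < p.2 ∧ σ p.2 < σ p.1 ∧ (p.1 : ℕ) % 2 ≠ (p.2 : ℕ) % 2)).card

/-- Membership in the right quotient `S_n^I` (generators indexed 1-based by `I ⊆ [n-1]`):
no descent at any position of `I`. Position `k ∈ I` (1-based) compares the values at the
0-based positions `k-1` and `k`. -/
def inQuotA (n : ℕ) (I : Finset ℕ) (σ : Equiv.Perm (Fin n)) : Prop :=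
  ∀ i j : Fin n, (j : ℕ) = (i : ℕ) + 1 → (i : ℕ) + 1 ∈ I → σ i < σ j

/-- Even chessboard elements: `i + σ(i)` is even for all `i` (0- or 1-based is equivalent). -/
def chessPlus (n : ℕ) (σ : Equiv.Perm (Fin n)) : Prop :=
  ∀ i : Fin n, ((i : ℕ) + (σ i : ℕ)) % 2 = 0

/-- Odd chessboard elements: `i + σ(i)` is odd for all `i`. -/
def chessMinus (n : ℕ) (σ : Equiv.Perm (Fin n)) : Prop :=
  ∀ i : Fin n, ((i : ℕ) + (σ i : ℕ)) % 2 = 1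

/-- Signed generating function `∑ (-1)^{ℓ(σ)} x^{L(σ)}` over the permutations satisfying `P`. -/
noncomputable def gfA (n : ℕ) (P : Equiv.Perm (Fin n) → Prop) : Polynomial ℤ :=
  ∑ σ : Equiv.Perm (Fin n),
    if P σ then (-1 : Polynomial ℤ) ^ (ellA n σ) * X ^ (oddLA n σ) else 0

/-!
Record for `σ` the parity pattern `u ↦ σ⁻¹ u mod 2` of the positions of the values.
Composing with the transposition of two adjacent values `u, u + 1` whose positions have the same
parity keeps the pattern and the odd length `L` and changes the sign of `(-1) ^ ℓ`, so only
alternating patterns contribute: the chessboard permutations, in two classes.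
Splitting off the value `v = σ 0` gives `ℓ = v + ℓ(w)`, and `L` gains the number of values
below `v` at odd positions. For an alternating pattern the pattern left for `w` has an equal
adjacent pair unless `v` is `0` or `n`, so the two classes satisfy a two-term recursion, and
its solution is the product formula.
-/

open Equiv

def positionParity {n : ℕ} (σ : Perm (Fin n)) (u : Fin n) : ZMod 2 :=
  ((σ⁻¹ u : Fin n) : ℕ)

noncomputable def gfParity (n : ℕ) (f : Fin n → ZMod 2) : ℤ[X] :=
  gfA n (fun σ => positionParity σ = f)

lemma signAux_eq_neg_one_pow_ellA {n : ℕ} (σ : Perm (Fin n)) :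
    Perm.signAux σ = (-1) ^ ellA n σ := by
  rw [Perm.signAux, prod_ite, prod_const, prod_const_one, mul_one, ellA]
  congr 1
  refine card_nbij' (fun x => (x.2, x.1)) (fun p => ⟨p.2, p.1⟩) ?_ ?_ (fun _ _ => rfl)
    (fun _ _ => rfl)
  · rintro ⟨a, b⟩ hx
    simp only [coe_filter, Set.mem_ofPred_eq, Perm.mem_finPairsLT, mem_univ, true_and] at hx ⊢
    exact ⟨hx.1, hx.2.lt_of_ne (σ.injective.ne hx.1.ne')⟩
  · rintro ⟨a, b⟩ hp
    simp only [coe_filter, Set.mem_ofPred_eq, Perm.mem_finPairsLT, mem_univ, true_and] at hp ⊢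
    exact ⟨hp.1, hp.2.le⟩

lemma neg_one_pow_ellA_swap_mul {R : Type*} [Ring R] {n : ℕ} (σ : Perm (Fin n)) {a b : Fin n}
    (hab : a ≠ b) : (-1 : R) ^ ellA n (swap a b * σ) = -(-1) ^ ellA n σ := by
  have h : ((-1 : ℤˣ) ^ ellA n (swap a b * σ) : ℤˣ) = -(-1) ^ ellA n σ := by
    rw [← signAux_eq_neg_one_pow_ellA, ← signAux_eq_neg_one_pow_ellA, Perm.signAux_mul,
      Perm.signAux_swap hab, neg_one_mul]
  simpa using congrArg (fun u : ℤˣ => ((u : ℤ) : R)) h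

lemma swap_lt_swap_iff_of_val_eq_succ {n : ℕ} {a b x y : Fin n} (hab : (b : ℕ) = a + 1)
    (h : ¬(x = a ∧ y = b)) (h' : ¬(x = b ∧ y = a)) : swap a b x < swap a b y ↔ x < y := by
  simp only [Fin.ext_iff] at h h'
  rw [Fin.lt_def, Fin.lt_def]
  simp only [swap_apply_def]
  split_ifs <;> simp only [Fin.ext_iff] at * <;> omega

lemma oddLA_swap_mul {n : ℕ} (σ : Perm (Fin n)) {a b : Fin n} (hab : (b : ℕ) = a + 1)
    (hpar : positionParity σ a = positionParity σ b) :
    oddLA n (swap a b * σ) = oddLA n σ := by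
  have hmod := (ZMod.natCast_eq_natCast_iff' _ _ 2).mp hpar
  unfold oddLA
  refine congrArg card (filter_congr fun p _ => and_congr_right fun _ => ?_)
  by_cases hp : (p.1 : ℕ) % 2 = (p.2 : ℕ) % 2
  · exact iff_of_false (fun h => h.2 hp) (fun h => h.2 hp)
  refine and_congr_left fun _ => swap_lt_swap_iff_of_val_eq_succ hab ?_ ?_ <;>
    rintro ⟨h1, h2⟩ <;> apply hp <;>
    rw [Perm.eq_inv_iff_eq.mpr h1, Perm.eq_inv_iff_eq.mpr h2] <;> omega

lemma positionParity_swap_mul {n : ℕ} (σ : Perm (Fin n)) (a b : Fin n) :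
    positionParity (swap a b * σ) = positionParity σ ∘ swap a b := by
  ext u
  simp [positionParity, Perm.mul_apply, swap_inv]

lemma gfParity_eq_zero_of_adjacent {n : ℕ} {f : Fin n → ZMod 2} {a b : Fin n}
    (hab : (b : ℕ) = a + 1) (hf : f a = f b) : gfParity n f = 0 := by
  have hne : a ≠ b := fun h => by simp [h] at hab
  have hf' : f ∘ swap a b = f := funext (apply_swap_eq_self hf)
  have hclass : ∀ σ : Perm (Fin n),
      positionParity (swap a b * σ) = f ↔ positionParity σ = f := by
    intro σ
    rw [positionParity_swap_mul]
    constructor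
    · intro h
      rw [← hf', ← h]
      ext
      simp
    · intro h
      rw [h, hf']
  -- reindexing by `σ ↦ swap a b * σ` negates every summand
  unfold gfParity gfA
  rw [← CharZero.eq_neg_self_iff, ← sum_neg_distrib, ← Equiv.sum_comp (Equiv.mulLeft (swap a b))]
  refine sum_congr rfl fun σ _ => ?_
  simp only [Equiv.coe_mulLeft, hclass]
  split_ifs with h
  · rw [neg_one_pow_ellA_swap_mul σ hne, oddLA_swap_mul σ hab (by rw [h, hf]), neg_mul]
  · rw [neg_zero]

noncomputable def consPerm {n : ℕ} (v : Fin (n + 1)) (w : Perm (Fin n)) : Perm (Fin (n + 1)) :=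
  (finSuccEquiv n).trans (w.optionCongr.trans (finSuccEquiv' v).symm)

@[simp]
lemma consPerm_zero {n : ℕ} (v : Fin (n + 1)) (w : Perm (Fin n)) : consPerm v w 0 = v := by
  simp [consPerm]

@[simp]
lemma consPerm_succ {n : ℕ} (v : Fin (n + 1)) (w : Perm (Fin n)) (j : Fin n) :
    consPerm v w j.succ = v.succAbove (w j) := by
  simp [consPerm]

lemma consPerm_bijective (n : ℕ) :
    Function.Bijective (fun p : Fin (n + 1) × Perm (Fin n) => consPerm p.1 p.2) := by
  rw [Fintype.bijective_iff_injective_and_card]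
  refine ⟨fun ⟨v, w⟩ ⟨v', w'⟩ h => ?_, by simp [Fintype.card_perm, Nat.factorial_succ]⟩
  have hv : v = v' := by simpa using congrArg (· 0) h
  subst hv
  have hw : w = w' := Equiv.ext fun j => by simpa using congrArg (· j.succ) h
  rw [hw]

noncomputable def invCount {n : ℕ} (r : ℕ → ℕ → Prop) (σ : Perm (Fin n)) : ℕ :=
  #{p : Fin n × Fin n | p.1 < p.2 ∧ σ p.2 < σ p.1 ∧ r p.1 p.2}

lemma ellA_eq_invCount {n : ℕ} (σ : Perm (Fin n)) : ellA n σ = invCount (fun _ _ => True) σ := by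
  simp only [ellA, invCount, and_true]

lemma oddLA_eq_invCount {n : ℕ} (σ : Perm (Fin n)) :
    oddLA n σ = invCount (fun i j => i % 2 ≠ j % 2) σ := by
  simp only [oddLA, invCount]

lemma invCount_consPerm {n : ℕ} {r : ℕ → ℕ → Prop} (hr : ∀ i j, r (i + 1) (j + 1) ↔ r i j)
    (v : Fin (n + 1)) (w : Perm (Fin n)) :
    invCount r (consPerm v w) =
      #{j : Fin n | (w j).castSucc < v ∧ r 0 (j + 1)} + invCount r w := by
  simp only [invCount, card_filter, Fintype.sum_prod_type, Fin.sum_univ_succ, consPerm_zero,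
    consPerm_succ, false_and, if_false, Fin.succ_pos, true_and,
    Fin.succAbove_lt_iff_castSucc_lt, Fin.succ_lt_succ_iff, Fin.succAbove_lt_succAbove_iff,
    Fin.val_zero, Fin.val_succ, hr, Fin.not_lt_zero, zero_add]

lemma ellA_consPerm {n : ℕ} (v : Fin (n + 1)) (w : Perm (Fin n)) :
    ellA (n + 1) (consPerm v w) = v + ellA n w := by
  rw [ellA_eq_invCount, ellA_eq_invCount, invCount_consPerm (fun _ _ => Iff.rfl)]
  congr 1
  rw [card_equiv w (t := {u : Fin n | (u : ℕ) < v}) (by simp [Fin.lt_def]),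
    Fin.card_filter_val_lt, min_eq_right (Nat.lt_succ_iff.mp v.is_lt)]

lemma oddLA_consPerm {n : ℕ} (v : Fin (n + 1)) (w : Perm (Fin n)) :
    oddLA (n + 1) (consPerm v w) =
      #{u : Fin n | u.castSucc < v ∧ positionParity w u = 0} + oddLA n w := by
  rw [oddLA_eq_invCount, oddLA_eq_invCount, invCount_consPerm (by omega)]
  congr 1
  refine card_equiv w fun j => ?_
  simp only [mem_filter, mem_univ, true_and, positionParity, Perm.coe_inv, symm_apply_apply,
    ZMod.natCast_eq_zero_iff_even, Nat.even_iff, and_congr_right_iff]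
  omega

lemma positionParity_consPerm {n : ℕ} (v : Fin (n + 1)) (w : Perm (Fin n)) :
    positionParity (consPerm v w) = Fin.insertNth v 0 (positionParity w + 1) := by
  ext x
  refine Fin.succAboveCases v ?_ (fun u => ?_) x
  · rw [Fin.insertNth_apply_same, positionParity, Perm.inv_eq_iff_eq.mpr (consPerm_zero v w).symm]
    simp
  · rw [Fin.insertNth_apply_succAbove, positionParity,
      Perm.inv_eq_iff_eq.mpr (by simp : v.succAbove u = consPerm v w (w⁻¹ u).succ)]
    simp [positionParity]

lemma gfParity_succ (n : ℕ) (f : Fin (n + 1) → ZMod 2) :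
    gfParity (n + 1) f = ∑ v : Fin (n + 1), if f v = 0 then
      (-1) ^ (v : ℕ) * X ^ #{u : Fin n | u.castSucc < v ∧ f (v.succAbove u) = 1} *
        gfParity n (fun u => f (v.succAbove u) + 1) else 0 := by
  have flip : ∀ x y : ZMod 2, x + 1 = y ↔ x = y + 1 := by decide
  rw [gfParity, gfA, ← (consPerm_bijective n).sum_comp, Fintype.sum_prod_type]
  refine sum_congr rfl fun v _ => ?_
  have hclass : ∀ w, positionParity (consPerm v w) = f ↔
      f v = 0 ∧ positionParity w = fun u => f (v.succAbove u) + 1 := by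
    intro w
    rw [positionParity_consPerm, Fin.insertNth_eq_iff]
    simp only [funext_iff, Pi.add_apply, Pi.one_apply, flip, Fin.removeNth, @eq_comm _ 0 (f v)]
  split_ifs with hv
  · rw [gfParity, gfA, mul_sum]
    refine sum_congr rfl fun w _ => ?_
    simp only [hclass, hv, true_and]
    split_ifs with hw
    · rw [ellA_consPerm, oddLA_consPerm, hw, pow_add, pow_add]
      simp only [flip, zero_add]
      ring
    · rw [mul_zero]
  · exact sum_eq_zero fun w _ => if_neg fun h => hv ((hclass w).mp h).1

def alternating (n : ℕ) (c : ZMod 2) : Fin n → ZMod 2 := fun u => ((u : ℕ) : ZMod 2) + c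

lemma exists_eq_alternating {n : ℕ} {f : Fin n → ZMod 2}
    (h : ∀ a b : Fin n, (b : ℕ) = a + 1 → f a ≠ f b) : ∃ c, f = alternating n c := by
  rcases n with _ | n
  · exact ⟨0, funext fun u => u.elim0⟩
  have step : ∀ x y : ZMod 2, x ≠ y → y = x + 1 := by decide
  refine ⟨f 0, funext fun u => ?_⟩
  induction u using Fin.induction with
  | zero => simp [alternating]
  | succ u ih =>
    rw [step _ _ (h u.castSucc u.succ (by simp)), ih]
    simp only [alternating, Fin.val_castSucc, Fin.val_succ, Nat.cast_succ]
    ring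

lemma gfA_eq_sum_gfParity (n : ℕ) : gfA n (fun _ => True) = ∑ f, gfParity n f := by
  simp only [gfParity, gfA, if_true]
  rw [sum_comm]
  -- the `if` inside `gfA` is decided classically, so the instance must be given explicitly
  exact sum_congr rfl fun σ _ =>
    (@Fintype.sum_ite_eq _ _ _ _ (fun _ _ => Classical.propDecidable _) (positionParity σ)
      fun _ => (-1 : ℤ[X]) ^ ellA n σ * X ^ oddLA n σ).symm

lemma gfA_eq_add_gfParity_alternating {n : ℕ} (hn : 1 ≤ n) :
    gfA n (fun _ => True) = gfParity n (alternating n 0) + gfParity n (alternating n 1) := by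
  have hne : alternating n 0 ≠ alternating n 1 := fun h => by
    simpa [alternating] using congrFun h ⟨0, hn⟩
  rw [gfA_eq_sum_gfParity, Fintype.sum_eq_add _ _ hne]
  rintro f ⟨h0, h1⟩
  obtain ⟨a, b, hab, hf⟩ : ∃ a b : Fin n, (b : ℕ) = a + 1 ∧ f a = f b := by
    by_contra! h
    obtain ⟨c, rfl⟩ := exists_eq_alternating h
    have : ∀ c : ZMod 2, c = 0 ∨ c = 1 := by decide
    rcases this c with rfl | rfl <;> contradiction
  exact gfParity_eq_zero_of_adjacent hab hf

lemma gfParity_succ_alternating {n : ℕ} (hn : 1 ≤ n) (c : ZMod 2) :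
    gfParity (n + 1) (alternating (n + 1) c) =
      (if c = 0 then gfParity n (alternating n c) else 0) +
      (if (n : ZMod 2) + c = 0 then
        (-1) ^ n * X ^ #{u : Fin n | ((u : ℕ) : ZMod 2) + c = 1} *
          gfParity n (alternating n (c + 1)) else 0) := by
  rw [gfParity_succ, Fintype.sum_eq_add 0 (Fin.last n) (by simp [Fin.ext_iff]; omega)]
  · congr 1
    · have hinner : (fun u : Fin n => alternating (n + 1) c (Fin.succAbove 0 u) + 1) =
          alternating n c := by
        ext u
        simp only [alternating, Fin.succAbove_zero, Fin.val_succ]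
        push_cast
        ring_nf
        reduce_mod_char
      rw [hinner]
      simp [alternating]
    · have hinner : (fun u : Fin n => alternating (n + 1) c ((Fin.last n).succAbove u) + 1) =
          alternating n (c + 1) := by
        ext u
        simp only [alternating, Fin.succAbove_last, Fin.val_castSucc]
        ring
      rw [hinner]
      simp [alternating, Fin.castSucc_lt_last]
  · rintro v ⟨h0, hlast⟩
    obtain ⟨k, hk⟩ : ∃ k, (v : ℕ) = k + 1 :=
      Nat.exists_eq_succ_of_ne_zero fun h => h0 (Fin.ext h)
    have hkn : k + 1 < n := by
      have : (v : ℕ) ≠ n := fun h => hlast (Fin.ext h)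
      omega
    rw [gfParity_eq_zero_of_adjacent (a := ⟨k, by omega⟩) (b := ⟨k + 1, hkn⟩) rfl, mul_zero,
      ite_self]
    rw [Fin.succAbove_of_castSucc_lt _ _ (by simp [Fin.lt_def, hk]),
      Fin.succAbove_of_le_castSucc _ _ (by simp [Fin.le_def, hk])]
    simp only [alternating, Fin.val_castSucc, Fin.val_succ]
    push_cast
    ring_nf
    reduce_mod_char

lemma card_filter_natCast_eq_zero_and_one (n : ℕ) :
    #{u : Fin n | ((u : ℕ) : ZMod 2) = 0} = (n + 1) / 2 ∧
      #{u : Fin n | ((u : ℕ) : ZMod 2) = 1} = n / 2 := by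
  induction n with
  | zero => simp
  | succ n ih =>
    have h0 : ∀ x : ZMod 2, x + 1 = 0 ↔ x = 1 := by decide
    have h1 : ∀ x : ZMod 2, x + 1 = 1 ↔ x = 0 := by decide
    simp only [Fin.card_filter_univ_succ', Fin.val_zero, Fin.val_succ, Nat.cast_succ, h0, h1,
      ih.1, ih.2]
    constructor
    · simp only [Nat.cast_zero, ↓reduceIte]
      omega
    · simp only [Nat.cast_zero, zero_ne_one, ↓reduceIte, zero_add]

lemma gfParity_one_alternating_zero : gfParity 1 (alternating 1 0) = 1 := by
  have h : positionParity (1 : Perm (Fin 1)) = alternating 1 0 := by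
    ext u
    simp [positionParity, alternating]
  simp [gfParity, gfA, h, show ellA 1 1 = 0 by decide, show oddLA 1 1 = 0 by decide]

lemma gfParity_alternating_zero_even (m : ℕ) :
    gfParity (2 * m + 2) (alternating _ 0) = gfParity (2 * m + 1) (alternating _ 0) := by
  rw [gfParity_succ_alternating (by omega)]
  have : ((2 * m + 1 : ℕ) : ZMod 2) = 1 := by push_cast; ring_nf; reduce_mod_char
  simp [this]

lemma gfParity_alternating_one_even (m : ℕ) :
    gfParity (2 * m + 2) (alternating _ 1) =
      -X ^ (m + 1) * gfParity (2 * m + 1) (alternating _ 0) := by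
  rw [gfParity_succ_alternating (by omega)]
  have : ((2 * m + 1 : ℕ) : ZMod 2) + 1 = 0 := by push_cast; ring_nf; reduce_mod_char
  rw [if_neg one_ne_zero, if_pos this, zero_add, show (1 + 1 : ZMod 2) = 0 from rfl]
  simp only [add_eq_right, (card_filter_natCast_eq_zero_and_one _).1]
  rw [show (2 * m + 1 + 1) / 2 = m + 1 by omega, Odd.neg_one_pow ⟨m, rfl⟩, neg_one_mul, neg_mul]

lemma gfParity_alternating_zero_odd (m : ℕ) :
    gfParity (2 * m + 3) (alternating _ 0) = gfParity (2 * m + 2) (alternating _ 0) +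
      X ^ (m + 1) * gfParity (2 * m + 2) (alternating _ 1) := by
  rw [gfParity_succ_alternating (by omega)]
  have : ((2 * m + 2 : ℕ) : ZMod 2) = 0 := by push_cast; ring_nf; reduce_mod_char
  rw [if_pos rfl, if_pos (by rw [this, add_zero]), zero_add]
  simp only [add_zero, (card_filter_natCast_eq_zero_and_one _).2]
  rw [show (2 * m + 2) / 2 = m + 1 by omega, Even.neg_one_pow ⟨m + 1, by ring⟩, one_mul]

lemma gfParity_alternating_one_odd (m : ℕ) : gfParity (2 * m + 1) (alternating _ 1) = 0 := by
  rcases m with _ | m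
  · simp [gfParity_succ, alternating]
  rw [gfParity_succ_alternating (by omega)]
  have : ((2 * (m + 1) : ℕ) : ZMod 2) + 1 = 1 := by push_cast; ring_nf; reduce_mod_char
  rw [if_neg one_ne_zero, if_neg (by rw [this]; exact one_ne_zero), add_zero]

lemma gfParity_alternating_zero_odd_eq_prod (m : ℕ) :
    gfParity (2 * m + 1) (alternating _ 0) = ∏ j ∈ Icc 1 m, (1 - X ^ (2 * j)) := by
  induction m with
  | zero => exact gfParity_one_alternating_zero
  | succ m ih =>
    rw [show 2 * (m + 1) + 1 = 2 * m + 3 by ring, gfParity_alternating_zero_odd,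
      gfParity_alternating_zero_even, gfParity_alternating_one_even, ih,
      prod_Icc_succ_top (by omega)]
    ring

/-- Corollary 4.4. For `n = 2m+1`,
`∑_{σ ∈ S_n} (-1)^{ℓ(σ)} x^{L(σ)} = ∏_{j=1}^{m} (1-x^{2j})`, and for `n = 2m` (`m ≥ 1`),
`∑_{σ ∈ S_n} (-1)^{ℓ(σ)} x^{L(σ)} = (1-x^m) ∏_{j=1}^{m-1} (1-x^{2j})`. -/
theorem statement12 (m : ℕ) :
    gfA (2 * m + 1) (fun _ => True) =
      ∏ j ∈ Finset.Icc 1 m, (1 - X ^ (2 * j)) ∧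
    (1 ≤ m → gfA (2 * m) (fun _ => True) =
      (1 - X ^ m) * ∏ j ∈ Finset.Icc 1 (m - 1), (1 - X ^ (2 * j))) := by
  refine ⟨?_, fun hm => ?_⟩
  · rw [gfA_eq_add_gfParity_alternating (by omega), gfParity_alternating_one_odd,
      gfParity_alternating_zero_odd_eq_prod, add_zero]
  · obtain ⟨k, rfl⟩ : ∃ k, m = k + 1 := ⟨m - 1, by omega⟩
    rw [gfA_eq_add_gfParity_alternating (by omega), show 2 * (k + 1) = 2 * k + 2 by ring,
      gfParity_alternating_zero_even, gfParity_alternating_one_even,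
      gfParity_alternating_zero_odd_eq_prod, Nat.add_sub_cancel]
    ring
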